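/- arXiv:math/0103224 — 3 statements merged into one kernel-verified Lean document; each statement's English description precedes it below -/
import Mathlib

section
/- Let L be a link in ℝ³ with thickness τ(L) = τ. Then any two distinct connected components of L are at (Euclidean) distance at least 2τ from each other. -/
open Set Metric Filter
open scoped ENNReal NNReal

noncomputable section

/-- Points of ℝ³. -/
abbrev E3 : Type := EuclideanSpace ℝ (Fin 3)

/-- The radius of the circle through three points `x y z` of ℝ³:
the infimal possible common distance from a point `c` to all three of them.
For non-collinear points this is the circumradius; for collinear (distinct)
points the set is empty and the value is `∞`. -/
def circumradius3 (x y z : E3) : ℝ≥0∞ :=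
  sInf {r : ℝ≥0∞ | ∃ c : E3, edist c x = r ∧ edist c y = r ∧ edist c z = r}

/-- The thickness of a set `L ⊆ ℝ³`: the infimum of `circumradius3 x y z`
over triples of pairwise distinct points of `L`. -/
def thickness (L : Set E3) : ℝ≥0∞ :=
  ⨅ (x ∈ L) (y ∈ L) (z ∈ L) (_ : x ≠ y) (_ : y ≠ z) (_ : x ≠ z),
    circumradius3 x y z
/-- A link with components indexed by `ι`: each component is a simple closed
curve parametrized with period 1, and distinct components are disjoint. -/
def IsLink {ι : Type} (γ : ι → ℝ → E3) : Prop :=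
  (∀ i, Continuous (γ i)) ∧ (∀ i, Function.Periodic (γ i) 1) ∧
  (∀ i, ∀ s ∈ Ico (0:ℝ) 1, ∀ t ∈ Ico (0:ℝ) 1, γ i s = γ i t → s = t) ∧
  Pairwise fun i j => ∀ s t, γ i s ≠ γ j t

open Topology

/-!
Let `x = γ i s`, `y = γ j t` and `K = range (γ i)`. The closed balls through `y` with centre
`y + t • (x - y)` and radius `t * ‖x - y‖` grow with `t`; at `t = 0` the ball misses `K`, at
`t = 1/2` it reaches `x`, so by the intermediate value theorem one of them, of radius at most
`‖x - y‖ / 2`, touches `K` from outside. Either `K` lies on its boundary sphere, which then holds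
three points of `K`, or a slightly larger ball of the family has a point of `K` inside and one
outside; the closed curve `K` then crosses its sphere twice, and these two points together with
`y` bound the thickness by a radius arbitrarily close to the touching one.
-/

theorem thickness_le_of_dist_eq {L : Set E3} {x y z : E3} (hx : x ∈ L) (hy : y ∈ L)
    (hz : z ∈ L) (hxy : x ≠ y) (hyz : y ≠ z) (hxz : x ≠ z) {c : E3} {ρ : ℝ}
    (hcx : dist c x = ρ) (hcy : dist c y = ρ) (hcz : dist c z = ρ) :
    thickness L ≤ ENNReal.ofReal ρ := by
  have hcirc : circumradius3 x y z ≤ ENNReal.ofReal ρ :=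
    sInf_le ⟨c, by rw [edist_dist, hcx], by rw [edist_dist, hcy], by rw [edist_dist, hcz]⟩
  refine le_trans ?_ hcirc
  exact iInf₂_le_of_le x hx <| iInf₂_le_of_le y hy <| iInf₂_le_of_le z hz <|
    iInf₂_le_of_le hxy hyz <| iInf_le _ hxz

namespace Function.Periodic

theorem apply_ne_of_injOn {α : Type*} {γ : ℝ → α} (hp : Periodic γ 1)
    (hinj : InjOn γ (Ico 0 1)) {a b : ℝ} (hab : a < b) (hba : b < a + 1) : γ a ≠ γ b := by
  have hfract (x : ℝ) : γ (Int.fract x) = γ x := by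
    simpa only [mul_one, Int.self_sub_floor] using hp.sub_int_mul_eq (x := x) ⌊x⌋
  intro h
  obtain ⟨n, hn⟩ := Int.fract_eq_fract.mp <|
    hinj ⟨Int.fract_nonneg a, Int.fract_lt_one a⟩ ⟨Int.fract_nonneg b, Int.fract_lt_one b⟩
      (by rw [hfract, hfract, h])
  have hn₁ : (-1 : ℝ) < n := by linarith
  have hn₀ : (n : ℝ) < 0 := by linarith
  norm_cast at hn₁ hn₀
  omega

theorem exists_eq_eq_of_lt_of_lt {g : ℝ → ℝ} (hp : Periodic g 1) (hg : Continuous g)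
    {a b c : ℝ} (ha : g a < c) (hb : c < g b) :
    ∃ w₁ w₂, w₁ < w₂ ∧ w₂ < w₁ + 1 ∧ g w₁ = c ∧ g w₂ = c := by
  set b' := b - ⌊b - a⌋
  have hgb' : g b' = g b := by simpa only [mul_one] using hp.sub_int_mul_eq (x := b) ⌊b - a⌋
  have hab' : a < b' := by
    refine lt_of_le_of_ne ?_ fun h => (ha.trans hb).ne (h ▸ hgb')
    linarith [Int.floor_le (b - a)]
  have hb'a : b' < a + 1 := by linarith [Int.lt_floor_add_one (b - a)]
  obtain ⟨w₁, ⟨hw₁a, hw₁b⟩, hw₁⟩ :=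
    intermediate_value_Ioo hab'.le hg.continuousOn ⟨ha, hgb' ▸ hb⟩
  obtain ⟨w₂, ⟨hw₂b, hw₂a⟩, hw₂⟩ :=
    intermediate_value_Ioo' hb'a.le hg.continuousOn ⟨(hp a).symm ▸ ha, hgb' ▸ hb⟩
  exact ⟨w₁, w₂, by linarith, by linarith, hw₁, hw₂⟩

end Function.Periodic

section BallsThroughPoint

variable {V : Type*} [NormedAddCommGroup V] [InnerProductSpace ℝ V]

theorem dist_add_smul_lt_of_dist_add_smul_le {y v z : V} (hz : z ≠ y) {t t' : ℝ} (htt' : t < t')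
    (h : dist z (y + t • v) ≤ t * ‖v‖) : dist z (y + t' • v) < t' * ‖v‖ := by
  have hsq (s : ℝ) :
      dist z (y + s • v) ^ 2 = ‖z - y‖ ^ 2 - 2 * s * inner ℝ (z - y) v + (s * ‖v‖) ^ 2 := by
    rw [dist_eq_norm, show z - (y + s • v) = (z - y) - s • v by abel, norm_sub_sq_real,
      inner_smul_right, norm_smul, Real.norm_eq_abs, mul_pow, mul_pow, sq_abs]
    ring
  have hzy : 0 < ‖z - y‖ := norm_pos_iff.mpr (sub_ne_zero.mpr hz)
  have htv : 0 ≤ t * ‖v‖ := dist_nonneg.trans h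
  have hle : ‖z - y‖ ^ 2 ≤ 2 * t * inner ℝ (z - y) v := by
    nlinarith [hsq t, pow_le_pow_left₀ dist_nonneg h 2]
  have hv : 0 < ‖v‖ := by
    refine (norm_nonneg v).lt_of_ne fun hv0 => ?_
    rw [(norm_eq_zero.mp hv0.symm), inner_zero_right] at hle
    nlinarith
  have ht : 0 < t := by
    rcases (nonneg_of_mul_nonneg_left htv hv).lt_or_eq with ht | ht
    · exact ht
    · rw [← ht] at hle; nlinarith
  have hinner : 0 < inner ℝ (z - y) v := by nlinarith
  refine lt_of_pow_lt_pow_left₀ 2 (mul_pos (ht.trans htt') hv).le ?_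
  nlinarith [hsq t']

theorem exists_infDist_add_smul_eq {K : Set V} (hK : IsClosed K) {x y : V} (hx : x ∈ K)
    (hy : y ∉ K) : ∃ t ∈ Ioc (0 : ℝ) (1 / 2), infDist (y + t • (x - y)) K = t * ‖x - y‖ := by
  set F : ℝ → ℝ := fun t => infDist (y + t • (x - y)) K - t * ‖x - y‖
  have hF : Continuous F := by fun_prop
  have hF₀ : 0 < F 0 := by
    simpa [F] using (hK.notMem_iff_infDist_pos ⟨x, hx⟩).mp hy
  have hF_half : F (1 / 2) ≤ 0 := by
    have hmid : dist (y + (1 / 2 : ℝ) • (x - y)) x = 1 / 2 * ‖x - y‖ := by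
      rw [dist_eq_norm, show y + (1 / 2 : ℝ) • (x - y) - x = (-(1 / 2) : ℝ) • (x - y) by module,
        norm_smul]
      norm_num
    have := (infDist_le_dist_of_mem (x := y + (1 / 2 : ℝ) • (x - y)) hx).trans_eq hmid
    simp only [F]
    linarith
  obtain ⟨t, ⟨ht₀, ht⟩, hFt⟩ :=
    intermediate_value_Icc' (by norm_num) hF.continuousOn ⟨hF_half, hF₀.le⟩
  refine ⟨t, ⟨ht₀.lt_of_ne ?_, ht⟩, sub_eq_zero.mp hFt⟩
  rintro rfl
  exact hF₀.ne' hFt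

end BallsThroughPoint

section ClosedCurve

variable {L : Set E3} {γ : ℝ → E3}

theorem thickness_le_of_range_subset_sphere (hp : Function.Periodic γ 1)
    (hinj : InjOn γ (Ico 0 1)) (hL : range γ ⊆ L) {c : E3} {ρ : ℝ}
    (hρ : range γ ⊆ sphere c ρ) : thickness L ≤ ENNReal.ofReal ρ := by
  have hon (w : ℝ) : dist c (γ w) = ρ := mem_sphere'.mp (hρ (mem_range_self w))
  exact thickness_le_of_dist_eq (hL (mem_range_self 0)) (hL (mem_range_self (1 / 3)))
    (hL (mem_range_self (2 / 3))) (hp.apply_ne_of_injOn hinj (by norm_num) (by norm_num))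
    (hp.apply_ne_of_injOn hinj (by norm_num) (by norm_num))
    (hp.apply_ne_of_injOn hinj (by norm_num) (by norm_num)) (hon 0) (hon _) (hon _)

theorem thickness_le_of_dist_lt_of_lt_dist (hc : Continuous γ) (hp : Function.Periodic γ 1)
    (hinj : InjOn γ (Ico 0 1)) (hL : range γ ⊆ L) {y c : E3} {ρ : ℝ} (hyL : y ∈ L)
    (hy : y ∉ range γ) (hcy : dist c y = ρ) {a b : ℝ} (ha : dist (γ a) c < ρ)
    (hb : ρ < dist (γ b) c) : thickness L ≤ ENNReal.ofReal ρ := by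
  obtain ⟨w₁, w₂, hw, hw', hw₁, hw₂⟩ := Function.Periodic.exists_eq_eq_of_lt_of_lt
    (g := fun w => dist (γ w) c) (fun w => by simp only [hp w]) (by fun_prop) ha hb
  exact thickness_le_of_dist_eq (hL (mem_range_self w₁)) (hL (mem_range_self w₂)) hyL
    (hp.apply_ne_of_injOn hinj hw hw') (fun h => hy ⟨w₂, h⟩) (fun h => hy ⟨w₁, h⟩)
    (by rw [dist_comm]; exact hw₁) (by rw [dist_comm]; exact hw₂) hcy

theorem thickness_le_of_infDist_eq (hc : Continuous γ) (hp : Function.Periodic γ 1)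
    (hinj : InjOn γ (Ico 0 1)) (hL : range γ ⊆ L) {y v : E3} (hyL : y ∈ L) (hy : y ∉ range γ)
    {t : ℝ} (ht : 0 ≤ t) (htan : infDist (y + t • v) (range γ) = t * ‖v‖) :
    thickness L ≤ ENNReal.ofReal (t * ‖v‖) := by
  by_cases hsphere : range γ ⊆ sphere (y + t • v) (t * ‖v‖)
  · exact thickness_le_of_range_subset_sphere hp hinj hL hsphere
  obtain ⟨_, ⟨b, rfl⟩, hb⟩ := not_subset.mp hsphere
  obtain ⟨_, ⟨a, rfl⟩, ha⟩ := (hp.compact_of_continuous one_ne_zero hc).exists_infDist_eq_dist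
    ⟨γ 0, mem_range_self 0⟩ (y + t • v)
  have hb_out : t * ‖v‖ < dist (γ b) (y + t • v) :=
    (htan ▸ dist_comm (y + t • v) (γ b) ▸ infDist_le_dist_of_mem (mem_range_self b)).lt_of_ne
      (Ne.symm hb)
  have hfar : ∀ᶠ s in 𝓝 t, s * ‖v‖ < dist (γ b) (y + s • v) :=
    (Continuous.tendsto (by fun_prop) t).eventually_lt (Continuous.tendsto (by fun_prop) t) hb_out
  refine ge_of_tendsto (f := fun s => ENNReal.ofReal (s * ‖v‖)) (x := 𝓝[>] t) ?_ ?_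
  · exact ((ENNReal.continuous_ofReal.comp (continuous_id.mul continuous_const)).tendsto t).mono_left
      nhdsWithin_le_nhds
  filter_upwards [self_mem_nhdsWithin, nhdsWithin_le_nhds hfar] with s (hts : t < s) hs
  have hnear : dist (γ a) (y + s • v) < s * ‖v‖ :=
    dist_add_smul_lt_of_dist_add_smul_le (fun h => hy ⟨a, h⟩) hts
      (by rw [dist_comm, ← ha, htan])
  have hcy : dist (y + s • v) y = s * ‖v‖ := by
    rw [dist_comm, dist_self_add_right, norm_smul, Real.norm_of_nonneg (ht.trans hts.le)]
  exact thickness_le_of_dist_lt_of_lt_dist hc hp hinj hL hyL hy hcy hnear hs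

end ClosedCurve

/-- If `L` is a link in ℝ³ with thickness `τ(L)`, then any two
distinct connected components of `L` are at Euclidean distance at least
`2 τ(L)` from each other. -/
theorem statement_2 {k : ℕ} (γ : Fin k → ℝ → E3) (hγ : IsLink γ)
    (i j : Fin k) (hij : i ≠ j) (s t : ℝ) :
    2 * thickness (⋃ i, range (γ i)) ≤ edist (γ i s) (γ j t) := by
  obtain ⟨hcont, hper, hinj, hdisj⟩ := hγ
  have hy : γ j t ∉ range (γ i) := fun ⟨s', hs'⟩ => hdisj hij s' t hs'
  obtain ⟨r, ⟨hr₀, hr⟩, htan⟩ := exists_infDist_add_smul_eq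
    ((hper i).compact_of_continuous one_ne_zero (hcont i)).isClosed (mem_range_self s) hy
  have hτ := thickness_le_of_infDist_eq (hcont i) (hper i) (fun a ha b hb => hinj i a ha b hb)
    (subset_iUnion (fun i => range (γ i)) i) (mem_iUnion.mpr ⟨j, t, rfl⟩) hy hr₀.le htan
  calc 2 * thickness (⋃ i, range (γ i))
      ≤ 2 * ENNReal.ofReal (r * ‖γ i s - γ j t‖) := by gcongr
    _ = ENNReal.ofReal (2 * r * ‖γ i s - γ j t‖) := by
        rw [mul_assoc, ENNReal.ofReal_mul zero_le_two, ENNReal.ofReal_ofNat]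
    _ ≤ ENNReal.ofReal ‖γ i s - γ j t‖ :=
        ENNReal.ofReal_le_ofReal (by nlinarith [norm_nonneg (γ i s - γ j t)])
    _ = edist (γ i s) (γ j t) := by rw [edist_dist, dist_eq_norm]
end
end

section
/- Thickness is upper semicontinuous with respect to the C^0 topology on the space of Lipschitz (C^{0,1}) closed curves: if closed curves L_i converge uniformly (with respect to constant-speed parametrizations) to a closed curve L, then τ(L) ≥ limsup_i τ(L_i). -/
/-!
If `c` is equidistant from three distinct points `x, y, z`, these points are not collinear, so
for a nearby triple `(u, v, w)` the two linear conditions on `c + d` to be equidistant from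
`u, v, w` (namely `⟪v - u, d⟫ = …` and `⟪w - u, d⟫ = …`) have a nondegenerate Gram determinant.
Solving them by Cramer's rule produces equidistant points `c + d` with `d → 0`. Hence the
circumradius is upper semicontinuous at triples of distinct points, and as the thickness is an
infimum over triples of points on the curve, pointwise convergence of the curves already makes
the thickness of the limit at least the `limsup` of the thicknesses.
-/

open Set Metric Filter
open scoped ENNReal NNReal

noncomputable section

open scoped RealInnerProductSpace Topology

section GramSolve

variable {E : Type*} [NormedAddCommGroup E] [InnerProductSpace ℝ E]

def gramDet (a b : E) : ℝ := ‖a‖ ^ 2 * ‖b‖ ^ 2 - ⟪a, b⟫ ^ 2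

/-- Cramer's rule for `⟪a, d⟫ = e₁`, `⟪b, d⟫ = e₂` with `d ∈ span {a, b}`. -/
def gramSolve (a b : E) (e₁ e₂ : ℝ) : E :=
  ((e₁ * ‖b‖ ^ 2 - e₂ * ⟪a, b⟫) / gramDet a b) • a +
    ((e₂ * ‖a‖ ^ 2 - e₁ * ⟪a, b⟫) / gramDet a b) • b

lemma inner_gramSolve {a b : E} (h : gramDet a b ≠ 0) (e₁ e₂ : ℝ) :
    ⟪a, gramSolve a b e₁ e₂⟫ = e₁ ∧ ⟪b, gramSolve a b e₁ e₂⟫ = e₂ := by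
  simp only [gramSolve, inner_add_right, real_inner_smul_right, real_inner_self_eq_norm_sq,
    real_inner_comm a b]
  constructor <;> field_simp <;> unfold gramDet <;> ring

@[simp]
lemma gramSolve_zero (a b : E) : gramSolve a b 0 0 = 0 := by
  simp [gramSolve]

lemma gramDet_sub_ne_zero_of_not_collinear {x y z : E} (h : ¬Collinear ℝ {x, y, z}) :
    gramDet (y - x) (z - x) ≠ 0 := by
  intro hD
  apply h
  have hcs : ‖⟪y - x, z - x⟫‖ = ‖y - x‖ * ‖z - x‖ := by
    rw [Real.norm_eq_abs, ← sq_eq_sq₀ (abs_nonneg _) (by positivity), sq_abs, mul_pow]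
    unfold gramDet at hD
    linarith
  rcases ((norm_inner_eq_norm_tfae ℝ (y - x) (z - x)).out 0 2).1 hcs with hxy | ⟨r, hr⟩
  · rw [sub_eq_zero.1 hxy, insert_eq_of_mem (mem_insert _ _)]
    exact collinear_pair ℝ x z
  · refine (collinear_iff_of_mem (mem_insert x _)).2 ⟨y - x, ?_⟩
    simp only [mem_insert_iff, mem_singleton_iff, forall_eq_or_imp, forall_eq, vadd_eq_add]
    exact ⟨⟨0, by simp⟩, ⟨1, by simp⟩, ⟨r, by rw [← hr]; abel⟩⟩

variable {α : Type*} {l : Filter α} {a b : α → E} {a₀ b₀ : E}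

lemma Filter.Tendsto.gramDet (ha : Tendsto a l (𝓝 a₀)) (hb : Tendsto b l (𝓝 b₀)) :
    Tendsto (fun n => _root_.gramDet (a n) (b n)) l (𝓝 (_root_.gramDet a₀ b₀)) :=
  ((ha.norm.pow 2).mul (hb.norm.pow 2)).sub ((ha.inner hb).pow 2)

lemma Filter.Tendsto.gramSolve {e₁ e₂ : α → ℝ} {e₁₀ e₂₀ : ℝ}
    (ha : Tendsto a l (𝓝 a₀)) (hb : Tendsto b l (𝓝 b₀))
    (he₁ : Tendsto e₁ l (𝓝 e₁₀)) (he₂ : Tendsto e₂ l (𝓝 e₂₀)) (h : _root_.gramDet a₀ b₀ ≠ 0) :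
    Tendsto (fun n => _root_.gramSolve (a n) (b n) (e₁ n) (e₂ n)) l
      (𝓝 (_root_.gramSolve a₀ b₀ e₁₀ e₂₀)) :=
  ((((he₁.mul (hb.norm.pow 2)).sub (he₂.mul (ha.inner hb))).div (ha.gramDet hb) h).smul ha).add
    ((((he₂.mul (ha.norm.pow 2)).sub (he₁.mul (ha.inner hb))).div (ha.gramDet hb) h).smul hb)

end GramSolve

section Equidistant

variable {E : Type*} [NormedAddCommGroup E] [InnerProductSpace ℝ E]

lemma dist_add_eq_dist_add_iff (c d p q : E) :
    dist (c + d) p = dist (c + d) q ↔ ⟪q - p, d⟫ = ‖q - p‖ ^ 2 / 2 - ⟪c - p, q - p⟫ := by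
  rw [← AffineSubspace.mem_perpBisector_iff_dist_eq,
    AffineSubspace.mem_perpBisector_iff_inner_eq, vsub_eq_sub, vsub_eq_sub,
    dist_eq_norm_sub', add_sub_right_comm, inner_add_left, real_inner_comm d (q - p)]
  constructor <;> intro h <;> linarith

lemma not_collinear_of_dist_eq {x y z c : E} (hy : dist c x = dist c y)
    (hz : dist c x = dist c z) (hxy : x ≠ y) (hyz : y ≠ z) (hxz : x ≠ z) :
    ¬Collinear ℝ {x, y, z} := by
  have hs : EuclideanGeometry.Cospherical {x, y, z} :=
    ⟨c, dist c x, by simp [dist_comm _ c, ← hy, ← hz]⟩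
  exact affineIndependent_iff_not_collinear_set.1 (hs.affineIndependent_of_ne hxy hxz hyz)

theorem exists_tendsto_dist_eq_of_not_collinear {x y z c : E} (hxyz : ¬Collinear ℝ {x, y, z})
    (hy : dist c x = dist c y) (hz : dist c x = dist c z) {α : Type*} {l : Filter α}
    {u v w : α → E} (hu : Tendsto u l (𝓝 x)) (hv : Tendsto v l (𝓝 y))
    (hw : Tendsto w l (𝓝 z)) :
    ∃ c' : α → E, Tendsto c' l (𝓝 c) ∧
      ∀ᶠ n in l, dist (c' n) (u n) = dist (c' n) (v n) ∧ dist (c' n) (u n) = dist (c' n) (w n) := by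
  let defect (p q : E) : ℝ := ‖q - p‖ ^ 2 / 2 - ⟪c - p, q - p⟫
  have defect_eq_zero {q : E} (hq : dist c x = dist c q) : defect x q = 0 := by
    simpa using ((dist_add_eq_dist_add_iff c 0 x q).1 (by simpa using hq)).symm
  have hdefect {q : α → E} {q₀ : E} (hq : Tendsto q l (𝓝 q₀)) :
      Tendsto (fun n => defect (u n) (q n)) l (𝓝 (defect x q₀)) :=
    (((hq.sub hu).norm.pow 2).div_const 2).sub
      ((tendsto_const_nhds.sub hu).inner (hq.sub hu))
  have hD := gramDet_sub_ne_zero_of_not_collinear hxyz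
  refine ⟨fun n => c + gramSolve (v n - u n) (w n - u n) (defect (u n) (v n))
    (defect (u n) (w n)), ?_, ?_⟩
  · simpa [defect_eq_zero hy, defect_eq_zero hz] using tendsto_const_nhds.add
      ((hv.sub hu).gramSolve (hw.sub hu) (hdefect hv) (hdefect hw) hD)
  · filter_upwards [((hv.sub hu).gramDet (hw.sub hu)).eventually_ne hD] with n hn
    obtain ⟨hsolv, hsolw⟩ := inner_gramSolve hn (defect (u n) (v n)) (defect (u n) (w n))
    exact ⟨(dist_add_eq_dist_add_iff _ _ _ _).2 hsolv, (dist_add_eq_dist_add_iff _ _ _ _).2 hsolw⟩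

end Equidistant

lemma circumradius3_le_edist {x y z c : E3} (hy : dist c x = dist c y)
    (hz : dist c x = dist c z) : circumradius3 x y z ≤ edist c x :=
  sInf_le ⟨c, rfl, by rw [edist_dist, edist_dist, hy], by rw [edist_dist, edist_dist, hz]⟩

theorem limsup_circumradius3_le {α : Type*} {l : Filter α} [l.NeBot] {x y z : E3}
    (hxy : x ≠ y) (hyz : y ≠ z) (hxz : x ≠ z) {u v w : α → E3} (hu : Tendsto u l (𝓝 x))
    (hv : Tendsto v l (𝓝 y)) (hw : Tendsto w l (𝓝 z)) :
    limsup (fun n => circumradius3 (u n) (v n) (w n)) l ≤ circumradius3 x y z := by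
  refine le_sInf ?_
  rintro r ⟨c, rfl, hcy, hcz⟩
  have hy : dist c x = dist c y := by rw [dist_edist, dist_edist, hcy]
  have hz : dist c x = dist c z := by rw [dist_edist, dist_edist, hcz]
  obtain ⟨c', hc', hequi⟩ := exists_tendsto_dist_eq_of_not_collinear
    (not_collinear_of_dist_eq hy hz hxy hyz hxz) hy hz hu hv hw
  calc limsup (fun n => circumradius3 (u n) (v n) (w n)) l
      ≤ limsup (fun n => edist (c' n) (u n)) l :=
        limsup_le_limsup (hequi.mono fun n hn => circumradius3_le_edist hn.1 hn.2)
    _ = edist c x := (hc'.edist hu).limsup_eq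

lemma thickness_le_circumradius3 {L : Set E3} {x y z : E3} (hx : x ∈ L) (hy : y ∈ L)
    (hz : z ∈ L) (hxy : x ≠ y) (hyz : y ≠ z) (hxz : x ≠ z) :
    thickness L ≤ circumradius3 x y z :=
  iInf₂_le_of_le x hx <| iInf₂_le_of_le y hy <| iInf₂_le_of_le z hz <|
    iInf₂_le_of_le hxy hyz <| iInf_le _ hxz

theorem limsup_thickness_range_le {α ι : Type*} {l : Filter α} [l.NeBot] {γ : α → ι → E3}
    {γ₀ : ι → E3} (h : ∀ t, Tendsto (fun n => γ n t) l (𝓝 (γ₀ t))) :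
    limsup (fun n => thickness (range (γ n))) l ≤ thickness (range γ₀) := by
  refine le_iInf₂ fun _ ⟨s, hs⟩ => le_iInf₂ fun _ ⟨t, ht⟩ => le_iInf₂ fun _ ⟨q, hq⟩ =>
    le_iInf₂ fun hxy hyz => le_iInf fun hxz => ?_
  subst hs ht hq
  have hne {a b : ι} (hab : γ₀ a ≠ γ₀ b) : ∀ᶠ n in l, γ n a ≠ γ n b :=
    ((h a).prodMk_nhds (h b)).eventually
      ((isOpen_ne_fun continuous_fst continuous_snd).mem_nhds hab)
  refine (limsup_le_limsup ?_).trans (limsup_circumradius3_le hxy hyz hxz (h s) (h t) (h q))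
  filter_upwards [hne hxy, hne hyz, hne hxz] with n hxyn hyzn hxzn
  exact thickness_le_circumradius3 (mem_range_self s) (mem_range_self t) (mem_range_self q)
    hxyn hyzn hxzn

theorem statement_3_general (γ : ℕ → ℝ → E3) (γ₀ : ℝ → E3)
    (hconv : TendstoUniformly γ γ₀ atTop) :
    limsup (fun n => thickness (range (γ n))) atTop ≤ thickness (range γ₀) :=
  limsup_thickness_range_le hconv.tendsto_at

/-- Thickness is upper semicontinuous with respect to the `C⁰`
topology on the space of Lipschitz (`C^{0,1}`) closed curves: if closed Lipschitz
curves `γ n` (parametrized with period 1) converge uniformly to a closed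
Lipschitz curve `γ₀`, then `limsup τ(γ n) ≤ τ(γ₀)`. -/
theorem statement_3 (γ : ℕ → ℝ → E3) (γ₀ : ℝ → E3)
    (hper : ∀ n, Function.Periodic (γ n) 1)
    (hper₀ : Function.Periodic γ₀ 1)
    (hlip : ∀ n, ∃ K : ℝ≥0, LipschitzWith K (γ n))
    (hlip₀ : ∃ K : ℝ≥0, LipschitzWith K γ₀)
    (hconv : TendstoUniformly γ γ₀ atTop) :
    limsup (fun n => thickness (range (γ n))) atTop ≤ thickness (range γ₀) :=
  statement_3_general γ γ₀ hconv
end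
end

section
/- Let K be a closed rectifiable curve in ℝ³ and let p be a point lying on a chord of K (i.e., on the line segment between two points of K) but not on K itself. Then the cone angle of K at p is at least 2π; that is, the radial projection of K to the unit sphere centered at p has length at least 2π. -/
/-!
Project the curve radially to the unit sphere around `p`. Since `p` lies strictly inside the chord
`[x, y]`, the projections of `x` and `y` are antipodal, so the projected curve is a closed curve on
the sphere through two antipodal points. Each of its two arcs between them has length at least the
spherical distance `π`, because the length of a continuous spherical curve dominates the angle
between its endpoints: chords of short arcs are almost as long as the angles they subtend.
-/

open Set Metric Filter
open scoped ENNReal NNReal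

noncomputable section

/-- The radial projection of `x` to the unit sphere centered at `p`. -/
def sphProj (p x : E3) : E3 := ‖x - p‖⁻¹ • (x - p)

/-- The cone angle at `p` of a closed curve parametrized with period 1: the
length of the radial projection of the curve to the unit sphere around `p`. -/
def coneAngle (γ : ℝ → E3) (p : E3) : ℝ≥0∞ :=
  eVariationOn (fun t => sphProj p (γ t)) (Icc 0 1)

open Topology InnerProductGeometry

theorem Real.mul_cos_le_sin {x : ℝ} (h0 : 0 ≤ x) (h1 : x ≤ Real.pi / 2) :
    x * Real.cos x ≤ Real.sin x := by
  rcases h1.lt_or_eq with h1 | rfl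
  · have hcos : 0 < Real.cos x := Real.cos_pos_of_mem_Ioo ⟨by linarith [Real.pi_pos], h1⟩
    have := Real.le_tan h0 h1
    rwa [Real.tan_eq_sin_div_cos, le_div_iff₀ hcos] at this
  · simp

section SphereCurves

variable {V : Type*} [NormedAddCommGroup V] [InnerProductSpace ℝ V]

theorem angle_mul_one_sub_le_norm_sub {u v : V} (hu : ‖u‖ = 1) (hv : ‖v‖ = 1) :
    angle u v * (1 - ‖u - v‖ ^ 2 / 4) ≤ ‖u - v‖ := by
  set y := angle u v / 2
  have hy0 : 0 ≤ y := div_nonneg (angle_nonneg u v) two_pos.le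
  have hyπ : y ≤ Real.pi / 2 := div_le_div_of_nonneg_right (angle_le_pi u v) two_pos.le
  have hsin : 0 ≤ Real.sin y := Real.sin_nonneg_of_nonneg_of_le_pi hy0 (by linarith [Real.pi_pos])
  have hcos : 0 ≤ Real.cos y := Real.cos_nonneg_of_mem_Icc ⟨by linarith [Real.pi_pos], hyπ⟩
  have hchord : ‖u - v‖ = 2 * Real.sin y := by
    have hsq := norm_sub_sq_eq_norm_sq_add_norm_sq_sub_two_mul_norm_mul_norm_mul_cos_angle u v
    rw [hu, hv, show angle u v = 2 * y by ring, Real.cos_two_mul, Real.cos_sq'] at hsq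
    nlinarith [norm_nonneg (u - v)]
  rw [hchord, show angle u v = 2 * y by ring]
  nlinarith [Real.mul_cos_le_sin hy0 hyπ, Real.sin_sq_add_cos_sq y, Real.cos_le_one y]

theorem ofReal_mul_angle_le_eVariationOn {σ : ℝ → V} {l r η δ : ℝ} (hη : η ∈ Icc 0 2)
    (hδ : 0 < δ) (hnorm : ∀ t ∈ Icc l r, ‖σ t‖ = 1)
    (hclose : ∀ s ∈ Icc l r, ∀ t ∈ Icc l r, dist s t ≤ δ → dist (σ s) (σ t) ≤ η) (n : ℕ)
    {a b : ℝ} (ha : l ≤ a) (hab : a ≤ b) (hb : b ≤ r) (hn : b - a ≤ n * δ) :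
    ENNReal.ofReal ((1 - η ^ 2 / 4) * angle (σ a) (σ b)) ≤ eVariationOn σ (Icc a b) := by
  have short : ∀ a b, l ≤ a → a ≤ b → b ≤ r → b - a ≤ δ →
      ENNReal.ofReal ((1 - η ^ 2 / 4) * angle (σ a) (σ b)) ≤ eVariationOn σ (Icc a b) := by
    intro a b ha hab hb hδab
    have hd : ‖σ a - σ b‖ ≤ η := by
      rw [← dist_eq_norm]
      exact hclose a ⟨ha, hab.trans hb⟩ b ⟨ha.trans hab, hb⟩ (by rwa [Real.dist_eq, abs_sub_comm,
        abs_of_nonneg (sub_nonneg.2 hab)])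
    have hkey := angle_mul_one_sub_le_norm_sub (hnorm a ⟨ha, hab.trans hb⟩)
      (hnorm b ⟨ha.trans hab, hb⟩)
    have hκ : 1 - η ^ 2 / 4 ≤ 1 - ‖σ a - σ b‖ ^ 2 / 4 := by
      nlinarith [norm_nonneg (σ a - σ b)]
    calc ENNReal.ofReal ((1 - η ^ 2 / 4) * angle (σ a) (σ b))
        ≤ ENNReal.ofReal ‖σ a - σ b‖ := ENNReal.ofReal_le_ofReal <| by
          rw [mul_comm]; exact (mul_le_mul_of_nonneg_left hκ (angle_nonneg _ _)).trans hkey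
      _ = edist (σ a) (σ b) := by rw [edist_dist, dist_eq_norm]
      _ ≤ eVariationOn σ (Icc a b) := eVariationOn.edist_le σ ⟨le_rfl, hab⟩ ⟨hab, le_rfl⟩
  induction n generalizing b with
  | zero => exact short a b ha hab hb (by rw [Nat.cast_zero, zero_mul] at hn; linarith)
  | succ n ih =>
    by_cases hδab : b - a ≤ δ
    · exact short a b ha hab hb hδab
    set m := b - δ
    have hκ : 0 ≤ 1 - η ^ 2 / 4 := by nlinarith [hη.1, hη.2]
    have hangle := angle_le_angle_add_angle (σ a) (σ m) (σ b)
    calc ENNReal.ofReal ((1 - η ^ 2 / 4) * angle (σ a) (σ b))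
        ≤ ENNReal.ofReal ((1 - η ^ 2 / 4) * angle (σ a) (σ m))
          + ENNReal.ofReal ((1 - η ^ 2 / 4) * angle (σ m) (σ b)) := by
          rw [← ENNReal.ofReal_add (mul_nonneg hκ (angle_nonneg _ _))
            (mul_nonneg hκ (angle_nonneg _ _))]
          exact ENNReal.ofReal_le_ofReal (by nlinarith)
      _ ≤ eVariationOn σ (Icc a m) + eVariationOn σ (Icc m b) :=
          add_le_add (ih (by linarith) (by linarith) (by push_cast at hn; linarith))
            (short m b (by linarith) (by linarith) hb (sub_sub_cancel b δ).le)
      _ = eVariationOn σ (Icc a b) := by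
          simpa using eVariationOn.Icc_add_Icc σ (s := univ) (by linarith : a ≤ m)
            (by linarith : m ≤ b) (mem_univ m)

theorem angle_le_eVariationOn {σ : ℝ → V} {l r : ℝ} (hlr : l ≤ r)
    (hσ : ContinuousOn σ (Icc l r)) (hnorm : ∀ t ∈ Icc l r, ‖σ t‖ = 1) :
    ENNReal.ofReal (angle (σ l) (σ r)) ≤ eVariationOn σ (Icc l r) := by
  have approx : ∀ η ∈ Ioo (0 : ℝ) 2,
      ENNReal.ofReal ((1 - η ^ 2 / 4) * angle (σ l) (σ r)) ≤ eVariationOn σ (Icc l r) := by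
    intro η hη
    obtain ⟨δ, hδ, hclose⟩ := Metric.uniformContinuousOn_iff_le.1
      (isCompact_Icc.uniformContinuousOn_of_continuous hσ) η hη.1
    obtain ⟨n, hn⟩ := exists_nat_ge ((r - l) / δ)
    exact ofReal_mul_angle_le_eVariationOn (Ioo_subset_Icc_self hη) hδ hnorm hclose n le_rfl hlr
      le_rfl (by rwa [div_le_iff₀ hδ] at hn)
  have hlim : Tendsto (fun η : ℝ => ENNReal.ofReal ((1 - η ^ 2 / 4) * angle (σ l) (σ r)))
      (𝓝[>] 0) (𝓝 (ENNReal.ofReal (angle (σ l) (σ r)))) := by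
    have hcont : Continuous fun η : ℝ => ENNReal.ofReal ((1 - η ^ 2 / 4) * angle (σ l) (σ r)) :=
      ENNReal.continuous_ofReal.comp (by fun_prop)
    simpa using (hcont.tendsto 0).mono_left nhdsWithin_le_nhds
  exact le_of_tendsto hlim <| eventually_of_mem (Ioo_mem_nhdsGT two_pos) approx

theorem two_pi_le_eVariationOn_of_antipodal {σ : ℝ → V} (hσ : ContinuousOn σ (Icc 0 1))
    (hnorm : ∀ t ∈ Icc (0 : ℝ) 1, ‖σ t‖ = 1) (hclosed : σ 1 = σ 0) {a b : ℝ}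
    (ha : a ∈ Icc (0 : ℝ) 1) (hb : b ∈ Icc (0 : ℝ) 1) (hab : σ b = -σ a) :
    ENNReal.ofReal (2 * Real.pi) ≤ eVariationOn σ (Icc 0 1) := by
  wlog hle : a ≤ b generalizing a b
  · exact this hb ha (by rw [hab, neg_neg]) (le_of_not_ge hle)
  have arc : ∀ l r, 0 ≤ l → l ≤ r → r ≤ 1 →
      ENNReal.ofReal (angle (σ l) (σ r)) ≤ eVariationOn σ (Icc l r) := fun l r hl hlr hr =>
    angle_le_eVariationOn hlr (hσ.mono (Icc_subset_Icc hl hr))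
      (fun t ht => hnorm t (Icc_subset_Icc hl hr ht))
  have hπ : angle (σ a) (σ b) = Real.pi := by
    rw [hab]
    exact angle_self_neg_of_nonzero (norm_ne_zero_iff.1 (by simp [hnorm a ha]))
  have htri : angle (σ b) (σ a) ≤ angle (σ b) (σ 1) + angle (σ 0) (σ a) := by
    rw [hclosed]; exact angle_le_angle_add_angle _ _ _
  have hsplit : eVariationOn σ (Icc 0 a) + eVariationOn σ (Icc a b) + eVariationOn σ (Icc b 1)
      = eVariationOn σ (Icc 0 1) := by
    have h₁ := eVariationOn.Icc_add_Icc σ ha.1 hle (mem_univ a)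
    have h₂ := eVariationOn.Icc_add_Icc σ (ha.1.trans hle) hb.2 (mem_univ b)
    simp only [univ_inter] at h₁ h₂
    rw [h₁, h₂]
  calc ENNReal.ofReal (2 * Real.pi)
      ≤ ENNReal.ofReal (angle (σ 0) (σ a)) + ENNReal.ofReal (angle (σ a) (σ b))
        + ENNReal.ofReal (angle (σ b) (σ 1)) := by
        rw [← ENNReal.ofReal_add (angle_nonneg _ _) (angle_nonneg _ _),
          ← ENNReal.ofReal_add (add_nonneg (angle_nonneg _ _) (angle_nonneg _ _))
            (angle_nonneg _ _)]
        exact ENNReal.ofReal_le_ofReal (by rw [angle_comm (σ b) (σ a), hπ] at htri; linarith)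
    _ ≤ eVariationOn σ (Icc 0 a) + eVariationOn σ (Icc a b) + eVariationOn σ (Icc b 1) :=
        add_le_add (add_le_add (arc 0 a le_rfl ha.1 ha.2) (arc a b ha.1 hle hb.2))
          (arc b 1 (ha.1.trans hle) hb.2 le_rfl)
    _ = eVariationOn σ (Icc 0 1) := hsplit

end SphereCurves

theorem norm_sphProj {p x : E3} (hx : x ≠ p) : ‖sphProj p x‖ = 1 := by
  rw [sphProj, norm_smul, norm_inv, norm_norm,
    inv_mul_cancel₀ (norm_ne_zero_iff.2 (sub_ne_zero.2 hx))]

theorem continuousOn_sphProj (p : E3) : ContinuousOn (sphProj p) {p}ᶜ := by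
  have hsub : ContinuousOn (fun x : E3 => x - p) {p}ᶜ := continuousOn_id.sub continuousOn_const
  exact (hsub.norm.inv₀ fun x hx => norm_ne_zero_iff.2 (sub_ne_zero.2 hx)).smul hsub

theorem sphProj_eq_neg_of_mem_segment {p x y : E3} (hp : p ∈ segment ℝ x y) (hx : x ≠ p)
    (hy : y ≠ p) : sphProj p y = -sphProj p x := by
  have hray := (mem_segment_iff_sameRay.1 hp).inv_norm_smul_eq (sub_ne_zero.2 hx.symm)
    (sub_ne_zero.2 hy)
  rw [sphProj, sphProj, ← hray, ← neg_sub x p, norm_neg, smul_neg]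

theorem statement_8_general (γ : ℝ → E3) (hcont : Continuous γ)
    (hper : Function.Periodic γ 1)
    (x y : E3) (hx : x ∈ range γ) (hy : y ∈ range γ)
    (p : E3) (hp : p ∈ segment ℝ x y) (hpK : p ∉ range γ) :
    ENNReal.ofReal (2 * Real.pi) ≤ coneAngle γ p := by
  have hne : ∀ t, γ t ≠ p := fun t h => hpK ⟨t, h⟩
  have hfund : ∀ z ∈ range γ, ∃ t ∈ Icc (0 : ℝ) 1, γ t = z := by
    rintro _ ⟨s, rfl⟩
    obtain ⟨t, ht, hst⟩ := hper.exists_mem_Ico₀ one_pos s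
    exact ⟨t, Ico_subset_Icc_self ht, hst.symm⟩
  obtain ⟨a, ha, rfl⟩ := hfund x hx
  obtain ⟨b, hb, rfl⟩ := hfund y hy
  refine two_pi_le_eVariationOn_of_antipodal ?_ (fun t _ => norm_sphProj (hne t)) ?_ ha hb
    (sphProj_eq_neg_of_mem_segment hp (hne a) (hne b))
  · exact ((continuousOn_sphProj p).comp_continuous hcont hne).continuousOn
  · exact congrArg (sphProj p) (by simpa using hper 0)

/-- Let `γ` be a closed rectifiable curve in ℝ³ and `p` a point
on a chord of `γ` (the segment between two points `x, y` of the curve) with `p`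
not on the curve itself.  Then the cone angle of the curve at `p` is at least
`2π`. -/
theorem statement_8 (γ : ℝ → E3) (hcont : Continuous γ)
    (hper : Function.Periodic γ 1)
    (hrect : eVariationOn γ (Icc 0 1) < ⊤)
    (x y : E3) (hx : x ∈ range γ) (hy : y ∈ range γ)
    (p : E3) (hp : p ∈ segment ℝ x y) (hpK : p ∉ range γ) :
    ENNReal.ofReal (2 * Real.pi) ≤ coneAngle γ p :=
  statement_8_general γ hcont hper x y hx hy p hp hpK
end
end
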